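/- Consider the map f : U ⊕ E₈(−2) → L := U^{⊕3} ⊕ E₈(−1)^{⊕2} ⊕ ⟨−2⟩ sending (u, x) to (u, 0, 0, x, x, 0), i.e. the identity of U onto the first U-summand, and E₈(−2) diagonally into E₈(−1) ⊕ E₈(−1) (using the identification of the underlying ℤ-module of E₈(−2) with that of E₈(−1)). Then f is a primitive isometric embedding, and every primitive vector v of the image f(U ⊕ E₈(−2)) has divisibility 1 in L, i.e. {⟨v,w⟩ : w ∈ L} = ℤ. -/

import Mathlib

open Matrix

/-- The bilinear form of the lattice `ℤⁿ` with Gram matrix `G`. -/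
def bform {n : ℕ} (G : Matrix (Fin n) (Fin n) ℤ) (v w : Fin n → ℤ) : ℤ :=
  v ⬝ᵥ G.mulVec w

/-- Gram matrix of the hyperbolic plane `U`. -/
def UMat : Matrix (Fin 2) (Fin 2) ℤ := !![0, 1; 1, 0]

/-- Gram matrix of the root lattice `E₈` (the `E₈` Cartan matrix). -/
def E8Mat : Matrix (Fin 8) (Fin 8) ℤ := CartanMatrix.E₈

/-- Gram matrix of the root lattice `D₄` (the `D₄` Cartan matrix). -/
def D4Mat : Matrix (Fin 4) (Fin 4) ℤ :=
  !![ 2, -1,  0,  0;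
     -1,  2, -1, -1;
      0, -1,  2,  0;
      0, -1,  0,  2]

/-- Orthogonal direct sum of two Gram matrices. -/
def dsum {m n : ℕ} (G : Matrix (Fin m) (Fin m) ℤ) (H : Matrix (Fin n) (Fin n) ℤ) :
    Matrix (Fin (m + n)) (Fin (m + n)) ℤ :=
  Matrix.reindex finSumFinEquiv finSumFinEquiv (Matrix.fromBlocks G 0 0 H)

/-- Gram matrix of `L = U³ ⊕ E₈(-1)² ⊕ ⟨-2⟩`, the Beauville–Bogomolov–Fujiki
lattice of manifolds of `K3^[2]`-type. -/
def LMat : Matrix (Fin 23) (Fin 23) ℤ :=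
  dsum (dsum (dsum UMat (dsum UMat UMat)) (dsum (-E8Mat) (-E8Mat))) !![-2]

/-- Gram matrix of `U(2) ⊕ E₈(-2)`. -/
def T1Mat : Matrix (Fin 10) (Fin 10) ℤ := dsum ((2 : ℤ) • UMat) ((-2 : ℤ) • E8Mat)

/-- Gram matrix of `U ⊕ E₈(-2)`. -/
def T2Mat : Matrix (Fin 10) (Fin 10) ℤ := dsum UMat ((-2 : ℤ) • E8Mat)

/-- Gram matrix of `U(2) ⊕ D₄(-1)`. -/
def T3Mat : Matrix (Fin 6) (Fin 6) ℤ := dsum ((2 : ℤ) • UMat) (-D4Mat)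

/-- `F` (viewed as the linear map `v ↦ F *ᵥ v` from `ℤᵐ` to `ℤᴺ`) is a primitive
isometric embedding of the lattice with Gram matrix `G` into the lattice with
Gram matrix `H`: it is injective, preserves the bilinear forms, and its image is
a primitive sublattice (the quotient by the image is torsion-free). -/
def IsPrimitiveIsometricEmb {m N : ℕ} (G : Matrix (Fin m) (Fin m) ℤ)
    (H : Matrix (Fin N) (Fin N) ℤ) (F : Matrix (Fin N) (Fin m) ℤ) : Prop :=
  Function.Injective F.mulVec ∧
  (∀ v w : Fin m → ℤ, bform H (F *ᵥ v) (F *ᵥ w) = bform G v w) ∧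
  (∀ (x : Fin N → ℤ) (c : ℤ), c ≠ 0 → (∃ v, c • x = F *ᵥ v) → ∃ v, x = F *ᵥ v)

/-- The matrix of the map `U ⊕ E₈(-2) → L = U³ ⊕ E₈(-1)² ⊕ ⟨-2⟩` sending
`(u, x)` to `(u, 0, 0, x, x, 0)`: the identity of `U` onto the first
`U`-summand (coordinates `0,1` of `L`), and `E₈(-2)` diagonally into
`E₈(-1) ⊕ E₈(-1)` (coordinates `6,…,13` and `14,…,21` of `L`). -/
def Fdiag : Matrix (Fin 23) (Fin 10) ℤ := fun i j =>
  if j.val < 2 then (if i.val = j.val then 1 else 0)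
  else if i.val = j.val + 4 ∨ i.val = j.val + 12 then 1 else 0

/-!
Both halves reduce to integer matrix identities. A left inverse `P` of `Fdiag` (reading off the
`U`-coordinates and the first `E₈`-copy) makes the image primitive: if `c • x = Fdiag t` then
`x = Fdiag (P x)`. For the divisibility, a matrix `W` with `Fdiagᵀ * LMat * W = 1` turns any
`f` with `t ⬝ᵥ f = 1` into a vector `W f` pairing to `1` with `Fdiag t`; such an `f` exists
because `t` is primitive in `ℤ¹⁰` and `ℤ` is a PID, and `W` exists because `U` and `E₈` are
unimodular.
-/

section

variable {m N : ℕ}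

theorem bform_mulVec_mulVec (H : Matrix (Fin N) (Fin N) ℤ) (A B : Matrix (Fin N) (Fin m) ℤ)
    (v w : Fin m → ℤ) : bform H (A *ᵥ v) (B *ᵥ w) = bform (Aᵀ * H * B) v w := by
  simp only [bform, mulVec_mulVec, dotProduct_mulVec, Matrix.mul_assoc, ← vecMul_vecMul,
    vecMul_transpose]

theorem exists_dotProduct_eq_one_of_primitive {R ι : Type*} [CommRing R]
    [IsPrincipalIdealRing R] [Fintype ι] (v : ι → R)
    (hv : ∀ (c : R) (w : ι → R), v = c • w → IsUnit c) : ∃ f : ι → R, v ⬝ᵥ f = 1 := by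
  obtain ⟨g, hI⟩ := (IsPrincipalIdealRing.principal (Ideal.span (Set.range v))).principal
  have hdvd : ∀ i, g ∣ v i := fun i =>
    Ideal.mem_span_singleton.mp (hI ▸ Ideal.subset_span ⟨i, rfl⟩ : v i ∈ Submodule.span R {g})
  choose w hw using hdvd
  have hg : IsUnit g := hv g w (funext hw)
  have hone : (1 : R) ∈ Ideal.span (Set.range v) := by
    rw [hI, ← Ideal.span, Ideal.span_singleton_eq_top.mpr hg]
    exact Submodule.mem_top
  obtain ⟨f, hf⟩ := (Submodule.mem_span_range_iff_exists_fun R).mp hone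
  exact ⟨f, by simpa only [dotProduct, smul_eq_mul, mul_comm] using hf⟩

theorem isPrimitiveIsometricEmb_of_mul_eq_one {G : Matrix (Fin m) (Fin m) ℤ}
    {H : Matrix (Fin N) (Fin N) ℤ} {F : Matrix (Fin N) (Fin m) ℤ} (P : Matrix (Fin m) (Fin N) ℤ)
    (hPF : P * F = 1) (hF : Fᵀ * H * F = G) : IsPrimitiveIsometricEmb G H F := by
  have hP : ∀ t, P *ᵥ (F *ᵥ t) = t := fun t => by rw [mulVec_mulVec, hPF, one_mulVec]
  refine ⟨Function.LeftInverse.injective hP, fun v w => by rw [bform_mulVec_mulVec, hF], ?_⟩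
  rintro x c hc ⟨t, ht⟩
  refine ⟨P *ᵥ x, smul_right_injective _ hc ?_⟩
  calc c • x = F *ᵥ t := ht
    _ = F *ᵥ (P *ᵥ (c • x)) := by rw [ht, hP]
    _ = c • F *ᵥ (P *ᵥ x) := by rw [mulVec_smul, mulVec_smul]

theorem exists_bform_eq_one_of_primitive {H : Matrix (Fin N) (Fin N) ℤ}
    {F : Matrix (Fin N) (Fin m) ℤ} (W : Matrix (Fin N) (Fin m) ℤ) (hW : Fᵀ * H * W = 1)
    (t : Fin m → ℤ) (hprim : ∀ (c : ℤ) (w : Fin N → ℤ), F *ᵥ t = c • w → IsUnit c) :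
    ∃ w : Fin N → ℤ, bform H (F *ᵥ t) w = 1 := by
  obtain ⟨f, hf⟩ := exists_dotProduct_eq_one_of_primitive t fun c s hs =>
    hprim c (F *ᵥ s) (by rw [hs, mulVec_smul])
  refine ⟨W *ᵥ f, ?_⟩
  calc bform H (F *ᵥ t) (W *ᵥ f) = bform (Fᵀ * H * W) t f := bform_mulVec_mulVec H F W t f
    _ = t ⬝ᵥ f := by rw [hW, bform, one_mulVec]
    _ = 1 := hf

end

def FdiagLeftInv : Matrix (Fin 10) (Fin 23) ℤ := fun j i =>
  if j.val < 2 then (if i.val = j.val then 1 else 0)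
  else if i.val = j.val + 4 then 1 else 0

def E8MatInv : Matrix (Fin 8) (Fin 8) ℤ :=
  !![4, 5, 7, 10, 8, 6, 4, 2;
     5, 8, 10, 15, 12, 9, 6, 3;
     7, 10, 14, 20, 16, 12, 8, 4;
     10, 15, 20, 30, 24, 18, 12, 6;
     8, 12, 16, 24, 20, 15, 10, 5;
     6, 9, 12, 18, 15, 12, 8, 4;
     4, 6, 8, 12, 10, 8, 6, 3;
     2, 3, 4, 6, 5, 4, 3, 2]

/-- `UMat⁻¹ = UMat` on the `U`-coordinates and `-E8MatInv` on the first `E₈(-1)`-copy. -/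
def FdiagDual : Matrix (Fin 23) (Fin 10) ℤ := fun i j =>
  if j.val < 2 then (if i.val = 1 - j.val then 1 else 0)
  else if h : 6 ≤ i.val ∧ i.val < 14 then
    -E8MatInv ⟨i.val - 6, by omega⟩ ⟨j.val - 2, by omega⟩
  else 0

theorem FdiagLeftInv_mul_Fdiag : FdiagLeftInv * Fdiag = 1 := by decide

theorem Fdiag_transpose_mul_LMat_mul_Fdiag : Fdiagᵀ * LMat * Fdiag = T2Mat := by decide

theorem Fdiag_transpose_mul_LMat_mul_FdiagDual : Fdiagᵀ * LMat * FdiagDual = 1 := by decide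

/-- The map `(u, x) ↦ (u, 0, 0, x, x, 0)` is a primitive isometric embedding of
`U ⊕ E₈(-2)` into `L = U³ ⊕ E₈(-1)² ⊕ ⟨-2⟩`, and every primitive vector of its
image has divisibility `1` in `L`. -/
theorem diag_embedding_UE8_primitive_div_one :
    IsPrimitiveIsometricEmb T2Mat LMat Fdiag ∧
    ∀ v : Fin 23 → ℤ, (∃ t : Fin 10 → ℤ, v = Fdiag *ᵥ t) →
      (∀ (c : ℤ) (w : Fin 23 → ℤ), v = c • w → IsUnit c) →
      ∃ w : Fin 23 → ℤ, bform LMat v w = 1 := by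
  refine ⟨isPrimitiveIsometricEmb_of_mul_eq_one FdiagLeftInv FdiagLeftInv_mul_Fdiag
    Fdiag_transpose_mul_LMat_mul_Fdiag, ?_⟩
  rintro v ⟨t, rfl⟩ hprim
  exact exists_bform_eq_one_of_primitive FdiagDual Fdiag_transpose_mul_LMat_mul_FdiagDual t hprim
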